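/- Let Σ = {0,1} and let G : Σ* → Σ* with |G(x)| = |x| + 1 for all x, and suppose G is almost 1-1 (i.e., |{G(x) : x ∈ Σ^n}| = 2^n(1 − τ(n)) for some negligible τ). Then for any language family C, G is a pseudorandom generator against C if and only if the range of G is gap C-pseudorandom. -/

import Mathlib

/-- `μ` is negligible: eventually smaller than the inverse of every polynomial. -/
def Negligible (μ : ℕ → ℝ) : Prop :=
  ∀ k : ℕ, ∀ᶠ n in Filter.atTop, μ n ≤ 1 / (n:ℝ)^k

/-- Probability that a uniformly random string of length `n` lies in `A`. -/
noncomputable def probIn (A : Set (List Bool)) (n : ℕ) : ℝ :=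
  ({y : List Bool | y.length = n ∧ y ∈ A}.ncard : ℝ) / 2^n

/-- `G` (with stretch factor `n+1`) fools the language `A`. -/
noncomputable def Fools (G : List Bool → List Bool) (A : Set (List Bool)) : Prop :=
  Negligible fun n =>
    |({x : List Bool | x.length = n ∧ G x ∈ A}.ncard : ℝ) / 2^n - probIn A (n+1)|

/-- `G` is a pseudorandom generator against the language family `C`. -/
noncomputable def PRGAgainst (G : List Bool → List Bool)
    (C : Set (Set (List Bool))) : Prop :=
  ∀ A ∈ C, Fools G A

/-- `L` is gap `C`-pseudorandom. -/
noncomputable def GapPseudorandom (L : Set (List Bool))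
    (C : Set (Set (List Bool))) : Prop :=
  ∀ A ∈ C, Negligible fun n =>
    |(({w : List Bool | w.length = n ∧ w ∈ L ∧ w ∈ A}.ncard : ℝ)
      - ({w : List Bool | w.length = n ∧ w ∉ L ∧ w ∈ A}.ncard : ℝ))| / 2^n

/-!
Write `X = {x ∈ Σⁿ | G x ∈ A}`. The advantage of `A` against `G` is `|X|/2ⁿ - Pr[A]`, while the
gap of `rang G` on `A ∩ Σⁿ⁺¹` is `(|G X| - |A ∖ rang G|)/2ⁿ⁺¹ = |G X|/2ⁿ - Pr[A]`, because the
stretch puts `rang G ∩ Σⁿ⁺¹` exactly on `G Σⁿ`. The two differ by `(|X| - |G X|)/2ⁿ`, and the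
collisions of `G` inside `X` are at most those in all of `Σⁿ`, namely `2ⁿ τ(n)`. Negligibility is
stable under adding `τ` and under the index shift `n ↦ n + 1`.
-/

open Filter

namespace Negligible

variable {μ ν : ℕ → ℝ}

lemma mono (h : ∀ n, μ n ≤ ν n) (hν : Negligible ν) : Negligible μ :=
  fun k => (hν k).mono fun _ hn => (h _).trans hn

/-- A constant factor is absorbed by one extra power of `n`. -/
lemma of_le_const_div (h : ∀ k : ℕ, ∃ c : ℝ, ∀ᶠ n in atTop, μ n ≤ c / (n : ℝ) ^ k) :
    Negligible μ := by
  intro k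
  obtain ⟨c, hc⟩ := h (k + 1)
  filter_upwards [hc, eventually_ge_atTop ⌈c⌉₊, eventually_gt_atTop 0] with n hμ hcn hn
  have hn' : (0 : ℝ) < n := by exact_mod_cast hn
  calc μ n ≤ c / (n : ℝ) ^ (k + 1) := hμ
    _ ≤ n / (n : ℝ) ^ (k + 1) := by gcongr; exact Nat.ceil_le.mp hcn
    _ = 1 / (n : ℝ) ^ k := by field_simp; ring

lemma add (hμ : Negligible μ) (hν : Negligible ν) : Negligible (fun n => μ n + ν n) :=
  of_le_const_div fun k => ⟨2, by
    filter_upwards [hμ k, hν k] with n h₁ h₂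
    linarith [show (2 : ℝ) / (n : ℝ) ^ k = 1 / (n : ℝ) ^ k + 1 / (n : ℝ) ^ k by ring]⟩

lemma comp_succ (h : Negligible μ) : Negligible (fun n => μ (n + 1)) := by
  intro k
  filter_upwards [(tendsto_add_atTop_nat 1).eventually (h k), eventually_gt_atTop 0]
    with n hμ hn
  refine hμ.trans (one_div_le_one_div_of_le (by positivity) ?_)
  gcongr
  linarith

lemma of_comp_succ (h : Negligible (fun n => μ (n + 1))) : Negligible μ :=
  of_le_const_div fun k => ⟨2 ^ k, by
    filter_upwards [(tendsto_sub_atTop_nat 1).eventually (h k), eventually_ge_atTop 2]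
      with m hμ hm
    obtain ⟨n, rfl⟩ : ∃ n, m = n + 1 := ⟨m - 1, by omega⟩
    have hn : (1 : ℝ) ≤ n := by exact_mod_cast (show 1 ≤ n by omega)
    simp only [add_tsub_cancel_right] at hμ
    refine hμ.trans ?_
    rw [div_le_div_iff₀ (by positivity) (by positivity), one_mul, ← mul_pow]
    gcongr
    push_cast
    linarith⟩

lemma comp_succ_iff : Negligible (fun n => μ (n + 1)) ↔ Negligible μ :=
  ⟨of_comp_succ, comp_succ⟩

lemma iff_of_abs_sub_le {τ : ℕ → ℝ} (hτ : Negligible τ) (h : ∀ n, |μ n - ν n| ≤ τ n) :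
    Negligible μ ↔ Negligible ν := by
  refine ⟨fun hμ => (hμ.add hτ).mono fun n => ?_, fun hν => (hν.add hτ).mono fun n => ?_⟩ <;>
  linarith [abs_le.mp (h n)]

end Negligible

/-- The number of points of `s` lost to collisions of `f` can only grow with `s`. -/
lemma Set.ncard_add_ncard_image_le {α β : Type*} {s t : Set α} (f : α → β) (hs : s.Finite)
    (hts : t ⊆ s) : t.ncard + (f '' s).ncard ≤ s.ncard + (f '' t).ncard := by
  have hsplit : f '' s = f '' t ∪ f '' (s \ t) := by
    rw [← Set.image_union, Set.union_sdiff_cancel hts]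
  have := Set.ncard_sdiff_add_ncard_of_subset hts hs
  calc t.ncard + (f '' s).ncard ≤ t.ncard + ((f '' t).ncard + (f '' (s \ t)).ncard) := by
        rw [hsplit]; gcongr; exact Set.ncard_union_le _ _
    _ ≤ t.ncard + ((f '' t).ncard + (s \ t).ncard) := by
        gcongr; exact Set.ncard_image_le hs.sdiff
    _ = s.ncard + (f '' t).ncard := by omega

lemma abs_abs_sub_le_of_abs_sub_le {a b c d t : ℝ} (hd : 0 < d) (h : |a - b| ≤ d * t) :
    |(|a / d - (b + c) / (2 * d)| - |b - c| / (2 * d))| ≤ t := by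
  have hbc : |b - c| / (2 * d) = |b / d - (b + c) / (2 * d)| := by
    rw [← abs_of_pos (by positivity : 0 < 2 * d), ← abs_div, abs_of_pos (by positivity : 0 < 2 * d)]
    congr 1
    field_simp
    ring
  calc _ ≤ |a / d - (b + c) / (2 * d) - (b / d - (b + c) / (2 * d))| := by
        rw [hbc]; exact abs_abs_sub_abs_le_abs_sub _ _
    _ = |a - b| / d := by rw [← abs_of_pos hd, ← abs_div, abs_of_pos hd]; ring_nf
    _ ≤ t := by rwa [div_le_iff₀ hd, mul_comm]

lemma ncard_setOf_length_eq (n : ℕ) : {l : List Bool | l.length = n}.ncard = 2 ^ n := by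
  rw [← Nat.card_coe_set_eq, ← Fintype.card_bool, ← card_vector n, ← Nat.card_eq_fintype_card]
  rfl

lemma abs_advantage_sub_gap_le {G : List Bool → List Bool}
    (hstretch : ∀ x, (G x).length = x.length + 1) {t : ℝ} {n : ℕ}
    (himage : ((G '' {x | x.length = n}).ncard : ℝ) = 2 ^ n * (1 - t)) (A : Set (List Bool)) :
    |(|({x : List Bool | x.length = n ∧ G x ∈ A}.ncard : ℝ) / 2 ^ n - probIn A (n + 1)|
      - |(({w : List Bool | w.length = n + 1 ∧ w ∈ {u | ∃ x, G x = u} ∧ w ∈ A}.ncard : ℝ)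
          - ({w : List Bool | w.length = n + 1 ∧ w ∉ {u | ∃ x, G x = u} ∧ w ∈ A}.ncard : ℝ))|
        / 2 ^ (n + 1))| ≤ t := by
  set X := {x : List Bool | x.length = n ∧ G x ∈ A}
  have hXfin : X.Finite := (List.finite_length_eq Bool n).subset fun _ hx => hx.1
  have hrange : {w | w.length = n + 1 ∧ w ∈ {u | ∃ x, G x = u} ∧ w ∈ A} = G '' X := by
    ext w
    constructor
    · rintro ⟨hw, ⟨x, rfl⟩, hA⟩
      exact ⟨x, ⟨by rw [hstretch] at hw; omega, hA⟩, rfl⟩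
    · rintro ⟨x, ⟨hx, hA⟩, rfl⟩
      exact ⟨by rw [hstretch, hx], ⟨x, rfl⟩, hA⟩
  have hprob : probIn A (n + 1) = ((G '' X).ncard
      + ({w : List Bool | w.length = n + 1 ∧ w ∉ {u | ∃ x, G x = u} ∧ w ∈ A}.ncard : ℝ))
        / (2 * 2 ^ n) := by
    rw [probIn, pow_succ', ← hrange, ← Nat.cast_add,
      ← Set.ncard_inter_add_ncard_sdiff_eq_ncard {y | y.length = n + 1 ∧ y ∈ A} (Set.range G)
        ((List.finite_length_eq Bool (n + 1)).subset fun _ hy => hy.1)]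
    congr 4 <;> ext w <;> simp only [Set.mem_ofPred_eq, Set.mem_inter_iff, Set.mem_sdiff,
      Set.mem_range] <;> tauto
  have hcoll := Set.ncard_add_ncard_image_le G (List.finite_length_eq Bool n)
    (fun _ hx => hx.1 : X ⊆ {x | x.length = n})
  have hX_image := Set.ncard_image_le (f := G) hXfin
  have hslice_image := Set.ncard_image_le (f := G) (List.finite_length_eq Bool n)
  rw [ncard_setOf_length_eq] at hcoll hslice_image
  rw [hrange, hprob, pow_succ']
  refine abs_abs_sub_le_of_abs_sub_le (by positivity) (abs_le.mpr ⟨?_, ?_⟩)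
  · have h₁ : ((G '' X).ncard : ℝ) ≤ X.ncard := by exact_mod_cast hX_image
    have h₂ : ((G '' {x | x.length = n}).ncard : ℝ) ≤ 2 ^ n := by exact_mod_cast hslice_image
    linarith
  · have h : (X.ncard + (G '' {x | x.length = n}).ncard : ℝ) ≤ 2 ^ n + (G '' X).ncard := by
      exact_mod_cast hcoll
    linarith

theorem stmt8_general (G : List Bool → List Bool)
    (hstretch : ∀ x, (G x).length = x.length + 1)
    (τ : ℕ → ℝ) (hτ : Negligible τ)
    (halmost : ∀ n,
      ({u : List Bool | ∃ x : List Bool, x.length = n ∧ G x = u}.ncard : ℝ)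
        = 2^n * (1 - τ n))
    (C : Set (Set (List Bool))) :
    PRGAgainst G C ↔ GapPseudorandom {u | ∃ x, G x = u} C := by
  refine forall₂_congr fun A _ => ?_
  conv_rhs => rw [← Negligible.comp_succ_iff]
  exact Negligible.iff_of_abs_sub_le hτ fun n => abs_advantage_sub_gap_le hstretch (halmost n) A

theorem stmt8 (G : List Bool → List Bool)
    (hstretch : ∀ x, (G x).length = x.length + 1)
    (τ : ℕ → ℝ) (hτpos : ∀ n, 0 ≤ τ n) (hτ : Negligible τ)
    (halmost : ∀ n,
      ({u : List Bool | ∃ x : List Bool, x.length = n ∧ G x = u}.ncard : ℝ)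
        = 2^n * (1 - τ n))
    (C : Set (Set (List Bool))) :
    PRGAgainst G C ↔ GapPseudorandom {u | ∃ x, G x = u} C :=
  stmt8_general G hstretch τ hτ halmost C
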